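/- For g ≥ 2, maps α_i : {0,…,g−1} → ℝ, an index i ≥ 0, an integer R ≥ 1 with R ∣ g, an integer a coprime to R, and any β ∈ ℝ: Σ_{0≤r<R} φ_i(β + ar/R)² ≤ g², where φ_i(β) := |Σ_{0≤n<g} e(α_i(n) − βn)|. -/

import Mathlib

/-- `e(t) = exp(2πit)`. -/
noncomputable def eC (t : ℝ) : ℂ := Complex.exp (2 * (Real.pi : ℂ) * Complex.I * (t : ℂ))

/-- `φ_i(β) = |Σ_{0≤n<g} e(α_i(n) − βn)|`. -/
noncomputable def phi (g : ℕ) (α : ℕ → ℕ → ℝ) (i : ℕ) (β : ℝ) : ℝ :=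
  ‖∑ n ∈ Finset.range g, eC (α i n - β * n)‖

/-!
Put `c_n = e(α_i(n) − βn)`, so that `φ_i(β + ar/R) = |Σ_n c_n e(−arn/R)|`. Expanding the squares
and summing over `r` first, orthogonality of the additive characters of `ℤ/Rℤ` together with
`gcd(a, R) = 1` gives `Σ_r φ_i(β + ar/R)² = R · Σ_{n ≡ m (mod R)} c_n c̄_m`. Each residue class
mod `R` meets `[0, g)` in exactly `g/R` points and `|c_n| = 1`, so this is at most
`R · g · g/R = g²`.
-/

open Finset

lemma eC_add (x y : ℝ) : eC (x + y) = eC x * eC y := by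
  simp only [eC, ← Complex.exp_add]
  push_cast
  ring_nf

lemma eC_mul_natCast (x : ℝ) (r : ℕ) : eC (x * r) = eC x ^ r := by
  simp only [eC, ← Complex.exp_nat_mul]
  push_cast
  ring_nf

lemma norm_eC (x : ℝ) : ‖eC x‖ = 1 := by
  simp [eC, Complex.norm_exp]

lemma conj_eC (x : ℝ) : starRingEnd ℂ (eC x) = eC (-x) := by
  simp only [eC, ← Complex.exp_conj, map_mul, Complex.conj_I, Complex.conj_ofReal, map_ofNat]
  push_cast
  ring_nf

lemma eC_eq_one_iff (x : ℝ) : eC x = 1 ↔ ∃ k : ℤ, (k : ℝ) = x := by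
  have h2πi : 2 * (Real.pi : ℂ) * Complex.I ≠ 0 := by simp [Real.pi_ne_zero]
  simp only [eC, Complex.exp_eq_one_iff]
  refine exists_congr fun k => ⟨fun h => ?_, fun h => ?_⟩
  · exact_mod_cast (mul_left_cancel₀ h2πi (h.trans (mul_comm _ _))).symm
  · rw [← h]
    push_cast
    ring

lemma eC_intCast (k : ℤ) : eC k = 1 :=
  (eC_eq_one_iff _).2 ⟨k, rfl⟩

lemma sum_range_eC_mul_div (R : ℕ) (hR : R ≠ 0) (k : ℤ) :
    ∑ r ∈ range R, eC (k * r / R) = if (R : ℤ) ∣ k then (R : ℂ) else 0 := by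
  have hR' : (R : ℝ) ≠ 0 := Nat.cast_ne_zero.2 hR
  have hpow : ∀ r : ℕ, eC (k * r / R) = eC (k / R) ^ r := fun r => by
    rw [← eC_mul_natCast, mul_div_right_comm]
  simp only [hpow]
  split_ifs with hdvd
  · have hone : eC (k / R) = 1 := by
      obtain ⟨j, rfl⟩ := hdvd
      rw [Int.cast_mul, Int.cast_natCast, mul_div_cancel_left₀ _ hR', eC_intCast]
    simp [hone]
  · have hne : eC (k / R) ≠ 1 := by
      intro h
      obtain ⟨j, hj⟩ := (eC_eq_one_iff _).1 h
      refine hdvd ⟨j, ?_⟩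
      rw [eq_div_iff hR'] at hj
      exact_mod_cast hj.symm.trans (mul_comm _ _)
    have hRth : eC (k / R) ^ R = 1 := by
      rw [← eC_mul_natCast, div_mul_cancel₀ _ hR', eC_intCast]
    have := geom_sum_mul (eC (k / R)) R
    rw [hRth, sub_self, mul_eq_zero] at this
    exact this.resolve_right (sub_ne_zero.2 hne)

lemma sum_range_sq_norm_sum_mul_eC (c : ℕ → ℂ) (g R : ℕ) (hR : R ≠ 0) (a : ℤ)
    (ha : IsCoprime a R) :
    ∑ r ∈ range R, ((‖∑ n ∈ range g, c n * eC (a * r / R * n)‖ ^ 2 : ℝ) : ℂ) =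
      R * ∑ n ∈ range g, ∑ m ∈ range g with m ≡ n [MOD R], c n * starRingEnd ℂ (c m) := by
  have horth : ∀ n m : ℕ, ∑ r ∈ range R, eC ((a * ((n : ℤ) - m) : ℤ) * r / R) =
      if m ≡ n [MOD R] then (R : ℂ) else 0 := fun n m => by
    rw [sum_range_eC_mul_div R hR]
    refine if_congr ?_ rfl rfl
    exact (⟨ha.symm.dvd_of_dvd_mul_left, fun h => h.mul_left a⟩ : _ ↔ _).trans
      Nat.modEq_iff_dvd.symm
  calc ∑ r ∈ range R, ((‖∑ n ∈ range g, c n * eC (a * r / R * n)‖ ^ 2 : ℝ) : ℂ)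
      = ∑ r ∈ range R, ∑ n ∈ range g, ∑ m ∈ range g,
          c n * starRingEnd ℂ (c m) * eC ((a * ((n : ℤ) - m) : ℤ) * r / R) := by
        refine sum_congr rfl fun r _ => ?_
        rw [Complex.ofReal_pow, ← Complex.mul_conj', map_sum, sum_mul_sum]
        refine sum_congr rfl fun n _ => sum_congr rfl fun m _ => ?_
        rw [map_mul, conj_eC, mul_mul_mul_comm, ← eC_add]
        push_cast
        ring_nf
    _ = ∑ n ∈ range g, ∑ m ∈ range g, c n * starRingEnd ℂ (c m) *
          ∑ r ∈ range R, eC ((a * ((n : ℤ) - m) : ℤ) * r / R) := by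
        rw [sum_comm]
        simp only [mul_sum]
        exact sum_congr rfl fun n _ => sum_comm
    _ = R * ∑ n ∈ range g, ∑ m ∈ range g with m ≡ n [MOD R], c n * starRingEnd ℂ (c m) := by
        simp only [horth, mul_ite, mul_zero, ← sum_filter, mul_sum]
        exact sum_congr rfl fun n _ => sum_congr rfl fun m _ => mul_comm _ _

lemma card_filter_range_modEq (g R : ℕ) (hR : 0 < R) (hRg : R ∣ g) (n : ℕ) :
    #{m ∈ range g | m ≡ n [MOD R]} = g / R := by
  rw [← Nat.count_eq_card_filter_range, Nat.count_modEq_card g hR, Nat.mod_eq_zero_of_dvd hRg]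
  simp

lemma norm_sum_modEq_le (c : ℕ → ℂ) (hc : ∀ n, ‖c n‖ ≤ 1) (g R : ℕ) (hR : 0 < R)
    (hRg : R ∣ g) :
    ‖∑ n ∈ range g, ∑ m ∈ range g with m ≡ n [MOD R], c n * starRingEnd ℂ (c m)‖ ≤
      g * (g / R : ℕ) := by
  have hterm : ∀ n m, ‖c n * starRingEnd ℂ (c m)‖ ≤ 1 := fun n m => by
    rw [norm_mul, Complex.norm_conj]
    exact mul_le_one₀ (hc n) (norm_nonneg _) (hc m)
  calc _ ≤ ∑ n ∈ range g, ∑ m ∈ range g with m ≡ n [MOD R], (1 : ℝ) :=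
        (norm_sum_le _ _).trans <| sum_le_sum fun n _ =>
          (norm_sum_le _ _).trans <| sum_le_sum fun m _ => hterm n m
    _ = g * (g / R : ℕ) := by
        simp [card_filter_range_modEq g R hR hRg]

theorem L2_orthogonality_general (g : ℕ) (α : ℕ → ℕ → ℝ) (i : ℕ)
    (R : ℕ) (hR1 : 1 ≤ R) (hRg : R ∣ g) (a : ℤ) (ha : IsCoprime a (R : ℤ)) (β : ℝ) :
    ∑ r ∈ Finset.range R, phi g α i (β + (a : ℝ) * r / R) ^ 2 ≤ (g : ℝ) ^ 2 := by
  set c : ℕ → ℂ := fun n => eC (α i n - β * n)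
  have hphi : ∀ r : ℕ, phi g α i (β + (a : ℝ) * r / R) =
      ‖∑ n ∈ range g, c n * eC (((-a : ℤ) : ℝ) * r / R * n)‖ := fun r => by
    refine congrArg norm (sum_congr rfl fun n _ => ?_)
    rw [← eC_add]
    push_cast
    ring_nf
  have hsum := sum_range_sq_norm_sum_mul_eC c g R (by omega) (-a) ha.neg_left
  have hbound := norm_sum_modEq_le c (fun n => (norm_eC _).le) g R hR1 hRg
  simp only [← hphi] at hsum
  calc ∑ r ∈ range R, phi g α i (β + (a : ℝ) * r / R) ^ 2
      ≤ ‖((∑ r ∈ range R, phi g α i (β + (a : ℝ) * r / R) ^ 2 : ℝ) : ℂ)‖ := by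
        rw [Complex.norm_real]
        exact le_abs_self _
    _ ≤ R * (g * (g / R : ℕ)) := by
        rw [Complex.ofReal_sum, hsum, norm_mul, Complex.norm_natCast]
        gcongr
    _ = (g : ℝ) ^ 2 := by
        rw [Nat.cast_div hRg (by positivity)]
        field_simp

theorem L2_orthogonality (g : ℕ) (hg : 2 ≤ g) (α : ℕ → ℕ → ℝ) (i : ℕ)
    (R : ℕ) (hR1 : 1 ≤ R) (hRg : R ∣ g) (a : ℤ) (ha : IsCoprime a (R : ℤ)) (β : ℝ) :
    ∑ r ∈ Finset.range R, phi g α i (β + (a : ℝ) * r / R) ^ 2 ≤ (g : ℝ) ^ 2 :=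
  L2_orthogonality_general g α i R hR1 hRg a ha β
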